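/- arXiv:2511.20894 — 2 statements merged into one kernel-verified Lean document; each statement's English description precedes it below -/
import Mathlib

section
/- For positive definite n×n matrices H and positive semidefinite matrices M, the marginal gain g(H) = log det(H + M) − log det(H) is antitone in H: if H₁ ⪯ H₂ (both positive definite) and M is positive semidefinite, then log det(H₂ + M) − log det(H₂) ≤ log det(H₁ + M) − log det(H₁). -/
open Matrix

private lemma psd_vecMulVec {n : ℕ} (v : Fin n → ℝ) :
    (vecMulVec v v).PosSemidef := by
  refine posSemidef_iff_dotProduct_mulVec.mpr ⟨?_, ?_⟩
  · ext i j
    simp [conjTranspose_apply, vecMulVec_apply, mul_comm]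
  · intro x
    have : star x ⬝ᵥ (vecMulVec v v) *ᵥ x = (v ⬝ᵥ x) * (v ⬝ᵥ x) := by
      simp [dotProduct, mulVec, vecMulVec_apply, Finset.mul_sum, Finset.sum_mul]
      rw [Finset.sum_comm]
      congr 1; ext i; congr 1; ext j; ring
    rw [this]
    exact mul_self_nonneg _

private lemma quad_inv_le {n : ℕ} {H₁ H₂ : Matrix (Fin n) (Fin n) ℝ}
    (hH₁ : H₁.PosDef) (hH₂ : H₂.PosDef) (hle : (H₂ - H₁).PosSemidef) (v : Fin n → ℝ) :
    v ⬝ᵥ H₂⁻¹ *ᵥ v ≤ v ⬝ᵥ H₁⁻¹ *ᵥ v := by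
  set x := H₂⁻¹ *ᵥ v with hxdef
  set w := H₁⁻¹ *ᵥ v with hwdef
  have hx : H₂ *ᵥ x = v := by
    rw [hxdef, mulVec_mulVec, mul_nonsing_inv _ hH₂.det_pos.ne'.isUnit, one_mulVec]
  have hw : H₁ *ᵥ w = v := by
    rw [hwdef, mulVec_mulVec, mul_nonsing_inv _ hH₁.det_pos.ne'.isUnit, one_mulVec]
  have hsym : ∀ (a b : Fin n → ℝ), a ⬝ᵥ H₁ *ᵥ b = b ⬝ᵥ H₁ *ᵥ a := by
    intro a b
    rw [dotProduct_mulVec, dotProduct_comm, ← mulVec_transpose]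
    congr 1
    rw [show H₁ᵀ = H₁ from hH₁.isHermitian]
  have h1 : 0 ≤ (x - w) ⬝ᵥ H₁ *ᵥ (x - w) := by
    have := hH₁.posSemidef.dotProduct_mulVec_nonneg (x - w)
    simpa using this
  have hexp : (x - w) ⬝ᵥ H₁ *ᵥ (x - w)
      = x ⬝ᵥ H₁ *ᵥ x - 2 * (v ⬝ᵥ x) + v ⬝ᵥ w := by
    rw [mulVec_sub, dotProduct_sub, sub_dotProduct, sub_dotProduct]
    have e1 : x ⬝ᵥ H₁ *ᵥ w = v ⬝ᵥ x := by rw [hw, dotProduct_comm]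
    have e2 : w ⬝ᵥ H₁ *ᵥ x = v ⬝ᵥ x := by rw [hsym, hw, dotProduct_comm]
    have e3 : w ⬝ᵥ H₁ *ᵥ w = v ⬝ᵥ w := by rw [hw, dotProduct_comm]
    rw [e1, e2, e3]; ring
  have h2 : x ⬝ᵥ H₁ *ᵥ x ≤ v ⬝ᵥ x := by
    have := hle.dotProduct_mulVec_nonneg x
    simp only [star_trivial, sub_mulVec, dotProduct_sub] at this
    rw [hx] at this
    have hxv : x ⬝ᵥ v = v ⬝ᵥ x := dotProduct_comm _ _
    linarith
  rw [hexp] at h1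
  linarith

private lemma det_add_vecMulVec {n : ℕ} {H : Matrix (Fin n) (Fin n) ℝ}
    (hH : H.PosDef) (v : Fin n → ℝ) :
    (H + vecMulVec v v).det = H.det * (1 + v ⬝ᵥ H⁻¹ *ᵥ v) := by
  have hfac : H + vecMulVec v v = H * (1 + H⁻¹ * vecMulVec v v) := by
    rw [mul_add, mul_one, ← Matrix.mul_assoc, mul_nonsing_inv _ hH.det_pos.ne'.isUnit,
      Matrix.one_mul]
  rw [hfac, det_mul]
  congr 1
  rw [vecMulVec_eq Unit, ← Matrix.mul_assoc, ← replicateCol_mulVec,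
    det_one_add_replicateCol_mul_replicateRow]

private lemma psd_sum {n : ℕ} (s : Finset (Fin n)) (B : Matrix (Fin n) (Fin n) ℝ) :
    (∑ i ∈ s, vecMulVec (B i) (B i)).PosSemidef :=
  Finset.sum_induction _ _ (fun _ _ ha hb => ha.add hb)
    (Matrix.PosSemidef.zero) (fun i _ => psd_vecMulVec (B i))

private lemma gain_le {n : ℕ} (H₁ H₂ : Matrix (Fin n) (Fin n) ℝ)
    (hH₁ : H₁.PosDef) (hH₂ : H₂.PosDef) (hle : (H₂ - H₁).PosSemidef)
    (s : Finset (Fin n)) (B : Matrix (Fin n) (Fin n) ℝ) :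
    Real.log (H₂ + ∑ i ∈ s, vecMulVec (B i) (B i)).det - Real.log H₂.det ≤
      Real.log (H₁ + ∑ i ∈ s, vecMulVec (B i) (B i)).det - Real.log H₁.det := by
  classical
  induction s using Finset.induction with
  | empty => simp
  | insert _ _ hns ih =>
    rename_i a s
    rw [Finset.sum_insert hns]
    set Ms := ∑ i ∈ s, vecMulVec (B i) (B i) with hMs
    have hK₁ : (H₁ + Ms).PosDef := hH₁.add_posSemidef (psd_sum s B)
    have hK₂ : (H₂ + Ms).PosDef := hH₂.add_posSemidef (psd_sum s B)
    have hdiff : ((H₂ + Ms) - (H₁ + Ms)).PosSemidef := by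
      simpa using hle
    have hq : (B a) ⬝ᵥ (H₂ + Ms)⁻¹ *ᵥ (B a) ≤ (B a) ⬝ᵥ (H₁ + Ms)⁻¹ *ᵥ (B a) :=
      quad_inv_le hK₁ hK₂ hdiff (B a)
    have hq₁0 : 0 ≤ (B a) ⬝ᵥ (H₁ + Ms)⁻¹ *ᵥ (B a) := by
      have := hK₁.inv.posSemidef.dotProduct_mulVec_nonneg (B a); simpa using this
    have hq₂0 : 0 ≤ (B a) ⬝ᵥ (H₂ + Ms)⁻¹ *ᵥ (B a) := by
      have := hK₂.inv.posSemidef.dotProduct_mulVec_nonneg (B a); simpa using this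
    have e₁ : H₁ + (vecMulVec (B a) (B a) + Ms) = (H₁ + Ms) + vecMulVec (B a) (B a) := by
      abel
    have e₂ : H₂ + (vecMulVec (B a) (B a) + Ms) = (H₂ + Ms) + vecMulVec (B a) (B a) := by
      abel
    rw [e₁, e₂, det_add_vecMulVec hK₁, det_add_vecMulVec hK₂,
      Real.log_mul hK₁.det_pos.ne' (by linarith),
      Real.log_mul hK₂.det_pos.ne' (by linarith)]
    have hlog : Real.log (1 + (B a) ⬝ᵥ (H₂ + Ms)⁻¹ *ᵥ (B a))
        ≤ Real.log (1 + (B a) ⬝ᵥ (H₁ + Ms)⁻¹ *ᵥ (B a)) :=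
      Real.log_le_log (by linarith) (by linarith)
    linarith

/-- The log-det marginal gain is antitone in the information matrix. -/
theorem logdet_gain_antitone (n : ℕ) (H₁ H₂ M : Matrix (Fin n) (Fin n) ℝ)
    (hH₁ : H₁.PosDef) (hH₂ : H₂.PosDef) (hle : (H₂ - H₁).PosSemidef)
    (hM : M.PosSemidef) :
    Real.log (H₂ + M).det - Real.log H₂.det ≤
      Real.log (H₁ + M).det - Real.log H₁.det := by
  obtain ⟨B, rfl⟩ : ∃ B : Matrix (Fin n) (Fin n) ℝ, M = Bᴴ * B := by
    open scoped MatrixOrder in exact CStarAlgebra.nonneg_iff_eq_star_mul_self.mp hM.nonneg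
  have hdecomp : Bᴴ * B = ∑ i ∈ Finset.univ, vecMulVec (B i) (B i) := by
    ext j k
    simp [mul_apply, vecMulVec_apply, conjTranspose_apply, Matrix.sum_apply]
  rw [hdecomp]
  exact gain_le H₁ H₂ hH₁ hH₂ hle Finset.univ B
end

section
/- Let ρ : Finset V → ℝ be monotone submodular with ρ(∅) = 0, and let Φ* achieve the maximum of ρ over subsets of size q. If a sequence of sets Φ₀ = ∅ ⊆ Φ₁ ⊆ … ⊆ Φ_q with |Φ_k| = k satisfies the greedy gain condition ρ(Φ_{k+1}) − ρ(Φ_k) ≥ (1/q)(ρ(Φ*) − ρ(Φ_k)) for every k, then ρ(Φ_q) ≥ (1 − 1/e)·ρ(Φ*). -/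
/-! The gain condition says that the gap `ρ Φ* - ρ Φₖ` shrinks by a factor `1 - 1/q` at each
step, so after `q` steps it is at most `(1 - 1/q)^q ρ Φ* ≤ ρ Φ* / e`, using `ρ Φ* ≥ ρ ∅ = 0`. -/

open Real

theorem sub_le_one_sub_inv_pow_mul_of_gain {f : ℕ → ℝ} {M : ℝ} {q n : ℕ}
    (hgain : ∀ k < n, f (k + 1) - f k ≥ (1 / q) * (M - f k)) :
    M - f n ≤ (1 - 1 / q) ^ n * (M - f 0) :=
  le_geom (u := fun k => M - f k) (Nat.one_sub_one_div_cast_nonneg q) n fun k hk => by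
    linarith [hgain k hk]

theorem one_sub_exp_neg_one_mul_le_of_gain {f : ℕ → ℝ} {M : ℝ} {q : ℕ} (hq : 1 ≤ q)
    (hf0 : f 0 = 0) (hM : 0 ≤ M)
    (hgain : ∀ k < q, f (k + 1) - f k ≥ (1 / q) * (M - f k)) :
    (1 - exp (-1)) * M ≤ f q := by
  have hpow : (1 - 1 / q : ℝ) ^ q ≤ exp (-1) :=
    one_sub_div_pow_le_exp_neg (by exact_mod_cast hq)
  have hgap := sub_le_one_sub_inv_pow_mul_of_gain hgain
  rw [hf0, sub_zero] at hgap
  linarith [mul_le_mul_of_nonneg_right hpow hM]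

theorem greedy_guarantee_general {V : Type*}
    (ρ : Finset V → ℝ) (hnorm : ρ ∅ = 0)
    (hmono : ∀ S T : Finset V, S ⊆ T → ρ S ≤ ρ T)
    (q : ℕ) (hq : 1 ≤ q)
    (Φstar : Finset V)
    (Φ : ℕ → Finset V) (h0 : Φ 0 = ∅)
    (hgain : ∀ k < q, ρ (Φ (k + 1)) - ρ (Φ k) ≥ (1 / q) * (ρ Φstar - ρ (Φ k))) :
    ρ (Φ q) ≥ (1 - 1 / Real.exp 1) * ρ Φstar := by
  have hstar_nonneg : 0 ≤ ρ Φstar := hnorm ▸ hmono ∅ Φstar (Finset.empty_subset _)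
  rw [one_div, ← exp_neg]
  exact one_sub_exp_neg_one_mul_le_of_gain (f := fun k => ρ (Φ k)) hq (by simp [h0, hnorm])
    hstar_nonneg hgain

/-- Nemhauser–Wolsey–Fisher greedy guarantee: ρ(Φ_q) ≥ (1 − 1/e)·ρ(Φ*). -/
theorem greedy_guarantee {V : Type*} [Fintype V] [DecidableEq V]
    (ρ : Finset V → ℝ) (hnorm : ρ ∅ = 0)
    (hmono : ∀ S T : Finset V, S ⊆ T → ρ S ≤ ρ T)
    (hsub : ∀ S T : Finset V, S ⊆ T → ∀ e ∉ T,
      ρ (insert e S) - ρ S ≥ ρ (insert e T) - ρ T)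
    (q : ℕ) (hq : 1 ≤ q)
    (Φstar : Finset V) (hcard : Φstar.card = q)
    (hopt : ∀ S : Finset V, S.card = q → ρ S ≤ ρ Φstar)
    (Φ : ℕ → Finset V) (h0 : Φ 0 = ∅)
    (hchain : ∀ k < q, Φ k ⊆ Φ (k + 1))
    (hΦcard : ∀ k ≤ q, (Φ k).card = k)
    (hgain : ∀ k < q, ρ (Φ (k + 1)) - ρ (Φ k) ≥ (1 / q) * (ρ Φstar - ρ (Φ k))) :
    ρ (Φ q) ≥ (1 - 1 / Real.exp 1) * ρ Φstar :=
  greedy_guarantee_general ρ hnorm hmono q hq Φstar Φ h0 hgain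
end
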